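/- Under Assumption 2, Σ ⊆ Σ_R, where Σ_R := { (A,B) ∈ ℝ^{p×(p+m)L}×ℝ^{p×m} : [A B]ᵀ ∈ Z_{p,(p+m)L+m}(N) } and N := [E 𝐗]Φ̂[E 𝐗]ᵀ ∈ S^{p+(p+m)L+m}. Moreover, if im E ⊇ im [I_p; 0_{((p+m)L+m)×p}] or Φ̂₂₂ ≺ 0, then Σ = Σ_R. -/

import Mathlib

open Matrix

noncomputable section

/-- Moore–Penrose pseudoinverse of a real square matrix, defined via classical choice
(the Moore–Penrose inverse exists and is unique for real matrices). -/
def pinv {k : Type*} [Fintype k] (A : Matrix k k ℝ) : Matrix k k ℝ := by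
  classical
  exact if h : ∃ B : Matrix k k ℝ,
      A * B * A = A ∧ B * A * B = B ∧ (A * B)ᵀ = A * B ∧ (B * A)ᵀ = B * A
    then h.choose else 0

/-- Positive semidefinite square root of a real matrix (junk value `0` if not PSD). -/
def msqrt {k : Type*} [Fintype k] [DecidableEq k] (A : Matrix k k ℝ) : Matrix k k ℝ := by
  classical
  exact if h : A.PosSemidef then
      (h.1.eigenvectorUnitary : Matrix k k ℝ) * diagonal ((↑) ∘ (√·) ∘ h.1.eigenvalues) *
        (star (h.1.eigenvectorUnitary : Matrix k k ℝ)) else 0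

/-- `Z_{q,r}(N) = { Z : [I; Z]ᵀ N [I; Z] ⪰ 0 }`. -/
def ZSet {q r : Type*} [Fintype q] [Fintype r] [DecidableEq q]
    (N : Matrix (q ⊕ r) (q ⊕ r) ℝ) : Set (Matrix r q ℝ) :=
  {Z | ((fromRows (1 : Matrix q q ℝ) Z)ᵀ * N * fromRows (1 : Matrix q q ℝ) Z).PosSemidef}

/-- `Z⁺_{q,r}(N) = { Z : [I; Z]ᵀ N [I; Z] ≻ 0 }`. -/
def ZSetP {q r : Type*} [Fintype q] [Fintype r] [DecidableEq q]
    (N : Matrix (q ⊕ r) (q ⊕ r) ℝ) : Set (Matrix r q ℝ) :=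
  {Z | ((fromRows (1 : Matrix q q ℝ) Z)ᵀ * N * fromRows (1 : Matrix q q ℝ) Z).PosDef}

/-- `Π_{q,r}`: symmetric matrices `N` with `N₂₂ ⪯ 0`, `ker N₂₂ ⊆ ker N₁₂` and
`N₁₁ - N₁₂ N₂₂† N₁₂ᵀ ⪰ 0`. -/
def PiSet (q r : Type*) [Fintype q] [Fintype r] : Set (Matrix (q ⊕ r) (q ⊕ r) ℝ) :=
  {N | N.IsSymm ∧ (-(N.toBlocks₂₂)).PosSemidef ∧
      (∀ x : r → ℝ, N.toBlocks₂₂ *ᵥ x = 0 → N.toBlocks₁₂ *ᵥ x = 0) ∧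
      (N.toBlocks₁₁ - N.toBlocks₁₂ * pinv N.toBlocks₂₂ * (N.toBlocks₁₂)ᵀ).PosSemidef}

/-- State index type for the AR model: `(p+m)L` coordinates, split as the first `p`
(which carry `y(t-1)`) and the remaining `(p+m)L - p`. -/
abbrev ARSt (p m L : ℕ) := Fin p ⊕ Fin ((p + m) * L - p)

/-- Row index type of the stacked AR data matrix `[Yᵀ, -Xᵀ, -Uᵀ]ᵀ`. -/
abbrev ARRows (p m L : ℕ) := Fin p ⊕ (ARSt p m L ⊕ Fin m)

/-- `[I_p A B]`. -/
def arSysRow {p m L : ℕ} (A : Matrix (Fin p) (ARSt p m L) ℝ) (B : Matrix (Fin p) (Fin m) ℝ) :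
    Matrix (Fin p) (ARRows p m L) ℝ :=
  fromCols (1 : Matrix (Fin p) (Fin p) ℝ) (fromCols A B)

/-- `𝐗 = [Yᵀ, -Xᵀ, -Uᵀ]ᵀ`. -/
def arBigX {p m L T : ℕ} (Y : Matrix (Fin p) (Fin T) ℝ) (X : Matrix (ARSt p m L) (Fin T) ℝ)
    (U : Matrix (Fin m) (Fin T) ℝ) : Matrix (ARRows p m L) (Fin T) ℝ :=
  fromRows Y (fromRows (-X) (-U))

/-- `𝒟` for the AR model. -/
def arDset {p m L T nh : ℕ} (E : Matrix (ARRows p m L) (Fin nh) ℝ)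
    (Φ : Matrix (Fin nh ⊕ Fin T) (Fin nh ⊕ Fin T) ℝ) :
    Set (Matrix (ARRows p m L) (Fin T) ℝ) :=
  {Δ | ∃ Δh : Matrix (Fin nh) (Fin T) ℝ, Δhᵀ ∈ ZSet Φ ∧ Δ = E * Δh}

/-- `Σ` for the AR model. -/
def arSigma {p m L T nh : ℕ} (Y : Matrix (Fin p) (Fin T) ℝ) (X : Matrix (ARSt p m L) (Fin T) ℝ)
    (U : Matrix (Fin m) (Fin T) ℝ) (E : Matrix (ARRows p m L) (Fin nh) ℝ)
    (Φ : Matrix (Fin nh ⊕ Fin T) (Fin nh ⊕ Fin T) ℝ) :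
    Set (Matrix (Fin p) (ARSt p m L) ℝ × Matrix (Fin p) (Fin m) ℝ) :=
  {AB | ∃ Δ' ∈ arDset E Φ, arSysRow AB.1 AB.2 * arBigX Y X U = arSysRow AB.1 AB.2 * Δ'}

/-- `N = [E 𝐗] Φ̂ [E 𝐗]ᵀ` for the AR model. -/
def arN {p m L T nh : ℕ} (Y : Matrix (Fin p) (Fin T) ℝ) (X : Matrix (ARSt p m L) (Fin T) ℝ)
    (U : Matrix (Fin m) (Fin T) ℝ) (E : Matrix (ARRows p m L) (Fin nh) ℝ)
    (Φ : Matrix (Fin nh ⊕ Fin T) (Fin nh ⊕ Fin T) ℝ) :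
    Matrix (ARRows p m L) (ARRows p m L) ℝ :=
  fromCols E (arBigX Y X U) * Φ * (fromCols E (arBigX Y X U))ᵀ

/-- `Σ_R` for the AR model. -/
def arSigmaR {p m L T nh : ℕ} (Y : Matrix (Fin p) (Fin T) ℝ) (X : Matrix (ARSt p m L) (Fin T) ℝ)
    (U : Matrix (Fin m) (Fin T) ℝ) (E : Matrix (ARRows p m L) (Fin nh) ℝ)
    (Φ : Matrix (Fin nh ⊕ Fin T) (Fin nh ⊕ Fin T) ℝ) :
    Set (Matrix (Fin p) (ARSt p m L) ℝ × Matrix (Fin p) (Fin m) ℝ) :=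
  {AB | (fromCols AB.1 AB.2)ᵀ ∈ ZSet (arN Y X U E Φ)}

/-- `[I_p; 0]` used in the image condition. -/
def arIota (p m L : ℕ) : Matrix (ARRows p m L) (Fin p) ℝ :=
  fromRows (1 : Matrix (Fin p) (Fin p) ℝ) (0 : Matrix (ARSt p m L ⊕ Fin m) (Fin p) ℝ)

namespace QMI

variable {n : Type*} [Fintype n] [DecidableEq n]

lemma realCT {m k : Type*} (A : Matrix m k ℝ) : Aᴴ = Aᵀ :=
  conjTranspose_eq_transpose_of_trivial A

lemma psdConj {m : Type*} [Fintype m] {A : Matrix n n ℝ} (hA : A.PosSemidef)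
    (B : Matrix m n ℝ) : (B * A * Bᵀ).PosSemidef := by
  rw [← realCT]; exact hA.mul_mul_conjTranspose_same B

lemma psdMulSelfT {m : Type*} [Fintype m] [Fintype n] (A : Matrix m n ℝ) :
    (A * Aᵀ).PosSemidef := by
  rw [← realCT]; exact posSemidef_self_mul_conjTranspose A

lemma symIdem {Q : Matrix n n ℝ} (hQT : Qᵀ = Q) (hQQ : Q * Q = Q) :
    (1 - Q).PosSemidef := by
  have h : (1 - Q) * (1 - Q)ᵀ = 1 - Q := by
    rw [transpose_sub, transpose_one, hQT, Matrix.mul_sub, Matrix.sub_mul, Matrix.sub_mul, hQQ]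
    simp [Matrix.mul_one, Matrix.one_mul]
  rw [← h]; exact psdMulSelfT _

lemma mulVec_col {l m k : Type*} [Fintype m] (A : Matrix l m ℝ) (B : Matrix m k ℝ) (j : k) :
    A *ᵥ (fun i => B i j) = fun i => (A * B) i j := by
  funext i; simp [mulVec, mul_apply, dotProduct]

lemma mp_unique (A B B' : Matrix n n ℝ)
    (h1 : A * B * A = A) (h2 : B * A * B = B) (h3 : (A * B)ᵀ = A * B) (h4 : (B * A)ᵀ = B * A)
    (h1' : A * B' * A = A) (h2' : B' * A * B' = B') (h3' : (A * B')ᵀ = A * B')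
    (h4' : (B' * A)ᵀ = B' * A) : B = B' := by
  have hAB : A * B = A * B' := by
    calc A * B = (A * B)ᵀ := h3.symm
    _ = ((A * B' * A) * B)ᵀ := by rw [h1']
    _ = ((A * B') * (A * B))ᵀ := by simp only [Matrix.mul_assoc]
    _ = (A * B)ᵀ * (A * B')ᵀ := by rw [transpose_mul]
    _ = (A * B) * (A * B') := by rw [h3, h3']
    _ = (A * B * A) * B' := by simp only [Matrix.mul_assoc]
    _ = A * B' := by rw [h1]
  have hBA : B * A = B' * A := by
    calc B * A = (B * A)ᵀ := h4.symm
    _ = (B * (A * B' * A))ᵀ := by rw [h1']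
    _ = ((B * A) * (B' * A))ᵀ := by simp only [Matrix.mul_assoc]
    _ = (B' * A)ᵀ * (B * A)ᵀ := by rw [transpose_mul]
    _ = (B' * A) * (B * A) := by rw [h4, h4']
    _ = B' * (A * B * A) := by simp only [Matrix.mul_assoc]
    _ = B' * A := by rw [h1]
  calc B = B * A * B := h2.symm
  _ = B * (A * B') := by rw [Matrix.mul_assoc, hAB]
  _ = (B' * A) * B' := by rw [← Matrix.mul_assoc, hBA]
  _ = B' := h2'

lemma psd_struct {K : Matrix n n ℝ} (hK : K.PosSemidef) :
    ∃ Kh Kd : Matrix n n ℝ, Kh * Kh = K ∧ Khᵀ = Kh ∧ Kdᵀ = Kd ∧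
      K * Kd * K = K ∧ Kd * K * Kd = Kd ∧ Kd * K = K * Kd ∧
      Kh * Kd * Kh = Kd * K ∧ Kh * (Kd * K) = Kh := by
  have hH := hK.1
  set U : Matrix n n ℝ := (IsHermitian.eigenvectorUnitary hH : Matrix n n ℝ) with hUdef
  have hU1 : star U * U = 1 :=
    (Matrix.mem_unitaryGroup_iff').mp (IsHermitian.eigenvectorUnitary hH).2
  set d : n → ℝ := hH.eigenvalues with hddef
  have hd : ∀ i, 0 ≤ d i := hK.eigenvalues_nonneg
  have hconj : ∀ a b : n → ℝ, (U * diagonal a * star U) * (U * diagonal b * star U)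
      = U * diagonal (fun i => a i * b i) * star U := by
    intro a b
    calc (U * diagonal a * star U) * (U * diagonal b * star U)
        = U * (diagonal a * ((star U * U) * (diagonal b * star U))) := by
          simp only [Matrix.mul_assoc]
    _ = U * (diagonal a * diagonal b) * star U := by
          rw [hU1, Matrix.one_mul]; simp only [Matrix.mul_assoc]
    _ = U * diagonal (fun i => a i * b i) * star U := by rw [diagonal_mul_diagonal]
  have hT : ∀ a : n → ℝ, (U * diagonal a * star U)ᵀ = U * diagonal a * star U := by
    intro a
    rw [← realCT]
    simp only [star_eq_conjTranspose, conjTranspose_mul, conjTranspose_conjTranspose,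
      diagonal_conjTranspose, star_trivial, Matrix.mul_assoc]
  have hKspec : K = U * diagonal d * star U := by
    have := hH.spectral_theorem
    rwa [RCLike.ofReal_real_eq_id, Function.id_comp] at this
  have hdeq : ∀ f g : n → ℝ, (∀ i, f i = g i) → U * diagonal f * star U = U * diagonal g * star U := by
    intro f g h
    have : f = g := funext h
    rw [this]
  refine ⟨U * diagonal (fun i => Real.sqrt (d i)) * star U,
    U * diagonal (fun i => (d i)⁻¹) * star U, ?_, hT _, hT _, ?_, ?_, ?_, ?_, ?_⟩
  · rw [hconj, hKspec]
    exact hdeq _ _ fun i => Real.mul_self_sqrt (hd i)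
  · rw [hKspec, hconj, hconj]
    refine hdeq _ _ fun i => ?_
    rcases eq_or_ne (d i) 0 with h | h
    · simp [h]
    · field_simp
  · rw [hKspec, hconj, hconj]
    refine hdeq _ _ fun i => ?_
    rcases eq_or_ne (d i) 0 with h | h
    · simp [h]
    · field_simp
  · rw [hKspec, hconj, hconj]
    exact hdeq _ _ fun i => mul_comm _ _
  · rw [hKspec, hconj, hconj, hconj]
    refine hdeq _ _ fun i => ?_
    rcases eq_or_ne (d i) 0 with h | h
    · simp [h]
    · rw [mul_comm (Real.sqrt (d i)) ((d i)⁻¹), mul_assoc, Real.mul_self_sqrt (hd i)]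
  · rw [hKspec, hconj, hconj]
    refine hdeq _ _ fun i => ?_
    rcases eq_or_ne (d i) 0 with h | h
    · simp [h]
    · rw [inv_mul_cancel₀ h, mul_one]

lemma dotSelf_nonneg {m : Type*} [Fintype m] (v : m → ℝ) : 0 ≤ v ⬝ᵥ v :=
  Finset.sum_nonneg fun i _ => mul_self_nonneg (v i)

lemma exists_theta {P NH NT : Type*} [Fintype P] [Fintype NH] [Fintype NT]
    [DecidableEq P] [DecidableEq NH] [DecidableEq NT]
    (F : Matrix P NH ℝ) (H : Matrix P NT ℝ) {K : Matrix NT NT ℝ} {S : Matrix NH NH ℝ}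
    (hS : S.PosSemidef)
    (Kh Kd : Matrix NT NT ℝ)
    (hKh2 : Kh * Kh = K) (hKhT : Khᵀ = Kh) (hKdT : Kdᵀ = Kd)
    (hK5 : Kd * K * Kd = Kd) (hKc : Kd * K = K * Kd)
    (hK7 : Kh * Kd * Kh = Kd * K)
    (h1 : (F * S * Fᵀ - H * K * Hᵀ).PosSemidef)
    (h2 : ∃ Θ₂ : Matrix NH NT ℝ, F * Θ₂ = H * (1 - Kd * K) ∧ Θ₂ * K = 0) :
    ∃ Θ : Matrix NH NT ℝ, F * Θ = H ∧ (S - Θ * K * Θᵀ).PosSemidef := by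
  classical
  obtain ⟨R, R', hRR, hRT, -, -, -, -, -, -⟩ := psd_struct hS
  obtain ⟨Θ₂, hΘ₂F, hΘ₂K⟩ := h2
  have hKT : Kᵀ = K := by rw [← hKh2, transpose_mul, hKhT]
  obtain ⟨M, hM⟩ : ∃ M, M = F * R := ⟨_, rfl⟩
  obtain ⟨P', hP'⟩ : ∃ P', P' = M * Mᵀ := ⟨_, rfl⟩
  have hP'psd : P'.PosSemidef := by rw [hP']; exact psdMulSelfT M
  obtain ⟨Ph, Pd, hPh2, hPhT, hPdT, hP4, hP5, hPc, hP7, hP8⟩ := psd_struct hP'psd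
  have hP'T : P'ᵀ = P' := by rw [hP', transpose_mul, transpose_transpose]
  obtain ⟨Hp, hHp⟩ : ∃ Hp, Hp = H * Kh := ⟨_, rfl⟩
  have hMM : P' = F * S * Fᵀ := by
    rw [hP', hM, transpose_mul]
    calc F * R * (Rᵀ * Fᵀ) = F * (R * Rᵀ) * Fᵀ := by simp only [Matrix.mul_assoc]
    _ = F * S * Fᵀ := by rw [hRT, hRR]
  have hHpHp : Hp * Hpᵀ = H * K * Hᵀ := by
    rw [hHp, transpose_mul, hKhT]
    calc H * Kh * (Kh * Hᵀ) = H * (Kh * Kh) * Hᵀ := by simp only [Matrix.mul_assoc]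
    _ = _ := by rw [hKh2]
  have hdiff : (P' - Hp * Hpᵀ).PosSemidef := by rw [hMM, hHpHp]; exact h1
  have hker : ∀ x, P' *ᵥ x = 0 → Hpᵀ *ᵥ x = 0 := by
    intro x hx
    have h0 : 0 ≤ x ⬝ᵥ ((P' - Hp * Hpᵀ) *ᵥ x) := by simpa using hdiff.dotProduct_mulVec_nonneg x
    rw [sub_mulVec, dotProduct_sub, hx, dotProduct_zero, zero_sub, le_neg, neg_zero] at h0
    have he : x ⬝ᵥ ((Hp * Hpᵀ) *ᵥ x) = (Hpᵀ *ᵥ x) ⬝ᵥ (Hpᵀ *ᵥ x) := by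
      rw [← mulVec_mulVec, dotProduct_mulVec, ← mulVec_transpose]
    rw [he] at h0
    exact dotProduct_self_eq_zero.mp (le_antisymm h0 (dotSelf_nonneg _))
  have hPzero : P' * (1 - Pd * P') = 0 := by
    rw [Matrix.mul_sub, Matrix.mul_one, ← Matrix.mul_assoc, hP4, sub_self]
  have hHcols : Hpᵀ * (1 - Pd * P') = 0 := by
    ext i j
    have hc : P' *ᵥ (fun k => (1 - Pd * P') k j) = 0 := by
      rw [mulVec_col, hPzero]
      funext i; simp
    have h4 := congrFun (hker _ hc) i
    rw [mulVec_col] at h4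
    simpa using h4
  have hfix : P' * (Pd * Hp) = Hp := by
    have h := congrArg Matrix.transpose hHcols
    rw [transpose_mul, transpose_sub, transpose_one, transpose_mul, hPdT, hP'T,
      transpose_transpose, transpose_zero, Matrix.sub_mul, Matrix.one_mul] at h
    have h2 := sub_eq_zero.mp h
    calc P' * (Pd * Hp) = P' * Pd * Hp := by simp only [Matrix.mul_assoc]
    _ = Hp := h2.symm
  obtain ⟨W, hW⟩ : ∃ W, W = Mᵀ * (Pd * Hp) := ⟨_, rfl⟩
  have hMW : M * W = Hp := by
    rw [hW]
    calc M * (Mᵀ * (Pd * Hp)) = (M * Mᵀ) * (Pd * Hp) := by simp only [Matrix.mul_assoc]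
    _ = Hp := by rw [← hP', hfix]
  have hWT : Wᵀ = Hpᵀ * (Pd * M) := by
    rw [hW, transpose_mul, transpose_mul, transpose_transpose, hPdT, Matrix.mul_assoc]
  have hQpsd : (1 - Mᵀ * Pd * M).PosSemidef := by
    apply symIdem
    · rw [transpose_mul, transpose_mul, transpose_transpose, hPdT]
      simp only [Matrix.mul_assoc]
    · calc Mᵀ * Pd * M * (Mᵀ * Pd * M) = Mᵀ * ((Pd * ((M * Mᵀ) * Pd)) * M) := by
            simp only [Matrix.mul_assoc]
      _ = Mᵀ * ((Pd * P' * Pd) * M) := by rw [← hP']; simp only [Matrix.mul_assoc]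
      _ = Mᵀ * Pd * M := by rw [hP5]; simp only [Matrix.mul_assoc]
  have e1 : Mᵀ * Pd * (P' - Hp * Hpᵀ) * (Mᵀ * Pd)ᵀ = Mᵀ * Pd * M - W * Wᵀ := by
    rw [transpose_mul, hPdT, transpose_transpose, Matrix.mul_sub, Matrix.sub_mul]
    congr 1
    · calc Mᵀ * Pd * P' * (Pd * M) = Mᵀ * ((Pd * P' * Pd) * M) := by
            simp only [Matrix.mul_assoc]
      _ = Mᵀ * Pd * M := by rw [hP5]; simp only [Matrix.mul_assoc]
    · rw [hW, transpose_mul, transpose_mul, transpose_transpose, hPdT]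
      simp only [Matrix.mul_assoc]
  have hWW : (1 - W * Wᵀ).PosSemidef := by
    have hsum := (psdConj hdiff (Mᵀ * Pd)).add hQpsd
    rw [e1] at hsum
    have e : Mᵀ * Pd * M - W * Wᵀ + (1 - Mᵀ * Pd * M) = 1 - W * Wᵀ := by abel
    rwa [e] at hsum
  obtain ⟨Pi, hPi⟩ : ∃ Pi, Pi = Kd * K := ⟨_, rfl⟩
  have hPiT : Piᵀ = Pi := by rw [hPi, transpose_mul, hKT, hKdT, ← hKc]
  have hPiPi : Pi * Pi = Pi := by
    rw [hPi]
    calc Kd * K * (Kd * K) = (Kd * K * Kd) * K := by simp only [Matrix.mul_assoc]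
    _ = Kd * K := by rw [hK5]
  refine ⟨R * (W * (Kd * Kh)) + Θ₂, ?_, ?_⟩
  · rw [Matrix.mul_add, hΘ₂F]
    have e : F * (R * (W * (Kd * Kh))) = H * Pi := by
      calc F * (R * (W * (Kd * Kh))) = (M * W) * (Kd * Kh) := by
            rw [hM]; simp only [Matrix.mul_assoc]
      _ = H * (Kh * Kd * Kh) := by rw [hMW, hHp]; simp only [Matrix.mul_assoc]
      _ = H * Pi := by rw [hK7, ← hPi]
    rw [e, ← hPi, Matrix.mul_sub, Matrix.mul_one]
    abel
  · have hKΘ₂T : K * Θ₂ᵀ = 0 := by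
      have h := congrArg Matrix.transpose hΘ₂K
      rwa [transpose_mul, hKT, transpose_zero] at h
    have hKhKKh : Kh * (K * (Kh * Kd)) = K * (K * Kd) := by
      rw [← hKh2]; simp only [Matrix.mul_assoc]
    have hmid : Kd * (Kh * (K * (Kh * (Kd * (Wᵀ * R))))) = Pi * (Wᵀ * R) := by
      calc Kd * (Kh * (K * (Kh * (Kd * (Wᵀ * R)))))
          = Kd * (Kh * (K * (Kh * Kd))) * (Wᵀ * R) := by simp only [Matrix.mul_assoc]
      _ = Kd * (K * (K * Kd)) * (Wᵀ * R) := by rw [hKhKKh]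
      _ = (Kd * K) * ((K * Kd) * (Wᵀ * R)) := by simp only [Matrix.mul_assoc]
      _ = Pi * (Pi * (Wᵀ * R)) := by rw [← hKc, ← hPi]
      _ = (Pi * Pi) * (Wᵀ * R) := by simp only [Matrix.mul_assoc]
      _ = Pi * (Wᵀ * R) := by rw [hPiPi]
    have hcore : (R * (W * (Kd * Kh)) + Θ₂) * K * (R * (W * (Kd * Kh)) + Θ₂)ᵀ
        = R * (W * Pi * Wᵀ) * R := by
      rw [transpose_add, Matrix.add_mul, Matrix.mul_add, Matrix.add_mul, Matrix.add_mul]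
      have z1 : Θ₂ * K * (R * (W * (Kd * Kh)))ᵀ = 0 := by rw [hΘ₂K, Matrix.zero_mul]
      have z2 : Θ₂ * K * Θ₂ᵀ = 0 := by rw [hΘ₂K, Matrix.zero_mul]
      have z3 : R * (W * (Kd * Kh)) * K * Θ₂ᵀ = 0 := by
        rw [Matrix.mul_assoc _ K Θ₂ᵀ, hKΘ₂T, Matrix.mul_zero]
      rw [z1, z2, z3, add_zero, add_zero, add_zero]
      have eT : (R * (W * (Kd * Kh)))ᵀ = Kh * (Kd * (Wᵀ * R)) := by
        rw [transpose_mul, transpose_mul, transpose_mul, hRT, hKhT, hKdT]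
        simp only [Matrix.mul_assoc]
      rw [eT]
      calc R * (W * (Kd * Kh)) * K * (Kh * (Kd * (Wᵀ * R)))
          = R * (W * (Kd * (Kh * (K * (Kh * (Kd * (Wᵀ * R))))))) := by
            simp only [Matrix.mul_assoc]
      _ = R * (W * (Pi * (Wᵀ * R))) := by rw [hmid]
      _ = R * (W * Pi * Wᵀ) * R := by simp only [Matrix.mul_assoc]
    have hpsd1 : (1 - W * Pi * Wᵀ).PosSemidef := by
      have hB : (W * (1 - Pi) * Wᵀ).PosSemidef := psdConj (symIdem hPiT hPiPi) W
      have hsum := hWW.add hB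
      have e : 1 - W * Wᵀ + W * (1 - Pi) * Wᵀ = 1 - W * Pi * Wᵀ := by
        rw [Matrix.mul_sub, Matrix.mul_one, Matrix.sub_mul]; abel
      rwa [e] at hsum
    have hfin := psdConj hpsd1 R
    rw [hRT] at hfin
    have e2 : R * (1 - W * Pi * Wᵀ) * R = S - (R * (W * (Kd * Kh)) + Θ₂) * K
        * (R * (W * (Kd * Kh)) + Θ₂)ᵀ := by
      rw [hcore, Matrix.mul_sub, Matrix.mul_one, Matrix.sub_mul, hRR]
    rwa [e2] at hfin


lemma pinv_eq {k : Type*} [Fintype k] (A B : Matrix k k ℝ)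
    (h1 : A * B * A = A) (h2 : B * A * B = B) (h3 : (A * B)ᵀ = A * B)
    (h4 : (B * A)ᵀ = B * A) : pinv A = B := by
  classical
  have hex : ∃ C : Matrix k k ℝ,
      A * C * A = A ∧ C * A * C = C ∧ (A * C)ᵀ = A * C ∧ (C * A)ᵀ = C * A :=
    ⟨B, h1, h2, h3, h4⟩
  unfold pinv
  rw [dif_pos hex]
  obtain ⟨g1, g2, g3, g4⟩ := hex.choose_spec
  exact mp_unique A _ B g1 g2 g3 g4 h1 h2 h3 h4

lemma quad_id {P NH NT : Type*} [Fintype P] [Fintype NH] [Fintype NT]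
    (Φ11 : Matrix NH NH ℝ) (Φ12 : Matrix NH NT ℝ) (K Kd : Matrix NT NT ℝ)
    (hKT : Kᵀ = K) (hKdT : Kdᵀ = Kd) (hK5 : Kd * K * Kd = Kd)
    (hproj : Φ12 * (Kd * K) = Φ12)
    (F : Matrix P NH ℝ) (G : Matrix P NT ℝ) :
    F * Φ11 * Fᵀ + G * Φ12ᵀ * Fᵀ + F * Φ12 * Gᵀ - G * K * Gᵀ
      = F * (Φ11 + Φ12 * Kd * Φ12ᵀ) * Fᵀ
        - (G - F * (Φ12 * Kd)) * K * (G - F * (Φ12 * Kd))ᵀ := by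
  have hKdK : K * Kd * Φ12ᵀ = Φ12ᵀ := by
    have h := congrArg Matrix.transpose hproj
    rwa [transpose_mul, transpose_mul, hKT, hKdT] at h
  have h5 : Kd * (K * Kd) = Kd := by rw [← Matrix.mul_assoc]; exact hK5
  have t1 : F * (Φ12 * Kd) * K * Gᵀ = F * Φ12 * Gᵀ := by
    have e : F * (Φ12 * (Kd * K)) * Gᵀ = F * Φ12 * Gᵀ := by rw [hproj]
    calc F * (Φ12 * Kd) * K * Gᵀ = F * (Φ12 * (Kd * K)) * Gᵀ := by
          simp only [Matrix.mul_assoc]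
    _ = F * Φ12 * Gᵀ := e
  have t2 : G * K * (F * (Φ12 * Kd))ᵀ = G * Φ12ᵀ * Fᵀ := by
    rw [transpose_mul, transpose_mul, hKdT]
    calc G * K * (Kd * Φ12ᵀ * Fᵀ) = G * ((K * Kd * Φ12ᵀ) * Fᵀ) := by
          simp only [Matrix.mul_assoc]
    _ = G * Φ12ᵀ * Fᵀ := by rw [hKdK]; simp only [Matrix.mul_assoc]
  have t3 : F * (Φ12 * Kd) * K * (F * (Φ12 * Kd))ᵀ = F * (Φ12 * Kd * Φ12ᵀ) * Fᵀ := by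
    rw [transpose_mul, transpose_mul, hKdT]
    calc F * (Φ12 * Kd) * K * (Kd * Φ12ᵀ * Fᵀ)
        = F * (Φ12 * (Kd * (K * Kd)) * Φ12ᵀ) * Fᵀ := by simp only [Matrix.mul_assoc]
    _ = F * (Φ12 * Kd * Φ12ᵀ) * Fᵀ := by rw [h5]
  have exp : (G - F * (Φ12 * Kd)) * K * (G - F * (Φ12 * Kd))ᵀ
      = G * K * Gᵀ - G * Φ12ᵀ * Fᵀ - F * Φ12 * Gᵀ + F * (Φ12 * Kd * Φ12ᵀ) * Fᵀ := by
    rw [transpose_sub, Matrix.sub_mul, Matrix.mul_sub, Matrix.sub_mul, Matrix.sub_mul, t1, t2, t3]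
    abel
  have expS : F * (Φ11 + Φ12 * Kd * Φ12ᵀ) * Fᵀ
      = F * Φ11 * Fᵀ + F * (Φ12 * Kd * Φ12ᵀ) * Fᵀ := by
    rw [Matrix.mul_add, Matrix.add_mul]
  rw [exp, expS]
  abel

lemma block_expand {Q NH NT : Type*} [Fintype Q] [Fintype NH] [Fintype NT]
    (Φ : Matrix (NH ⊕ NT) (NH ⊕ NT) ℝ) (F : Matrix Q NH ℝ) (G : Matrix Q NT ℝ) :
    fromCols F G * Φ * (fromCols F G)ᵀ
      = F * Φ.toBlocks₁₁ * Fᵀ + G * Φ.toBlocks₂₁ * Fᵀ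
        + F * Φ.toBlocks₁₂ * Gᵀ + G * Φ.toBlocks₂₂ * Gᵀ := by
  conv_lhs => rw [← fromBlocks_toBlocks Φ]
  rw [transpose_fromCols, fromCols_mul_fromBlocks, fromCols_mul_fromRows,
    Matrix.add_mul, Matrix.add_mul]
  abel

lemma key_expand {Q NH NT : Type*} [Fintype Q] [Fintype NH] [Fintype NT]
    (Φ : Matrix (NH ⊕ NT) (NH ⊕ NT) ℝ) (K Kd : Matrix NT NT ℝ)
    (hΦ22 : Φ.toBlocks₂₂ = -K) (h21 : Φ.toBlocks₂₁ = (Φ.toBlocks₁₂)ᵀ)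
    (hKT : Kᵀ = K) (hKdT : Kdᵀ = Kd) (hK5 : Kd * K * Kd = Kd)
    (hproj : Φ.toBlocks₁₂ * (Kd * K) = Φ.toBlocks₁₂)
    (F : Matrix Q NH ℝ) (G : Matrix Q NT ℝ) :
    fromCols F G * Φ * (fromCols F G)ᵀ
      = F * (Φ.toBlocks₁₁ + Φ.toBlocks₁₂ * Kd * (Φ.toBlocks₁₂)ᵀ) * Fᵀ
        - (G - F * (Φ.toBlocks₁₂ * Kd)) * K * (G - F * (Φ.toBlocks₁₂ * Kd))ᵀ := by
  rw [block_expand, h21, hΦ22,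
    ← quad_id Φ.toBlocks₁₁ Φ.toBlocks₁₂ K Kd hKT hKdT hK5 hproj F G,
    Matrix.mul_neg, Matrix.neg_mul, ← sub_eq_add_neg]

lemma mem_zset_iff {q r : Type*} [Fintype q] [Fintype r] [DecidableEq q]
    (Φ : Matrix (q ⊕ r) (q ⊕ r) ℝ) (Δ : Matrix q r ℝ) :
    Δᵀ ∈ ZSet Φ ↔ (fromCols (1 : Matrix q q ℝ) Δ * Φ * (fromCols (1 : Matrix q q ℝ) Δ)ᵀ).PosSemidef := by
  have e : fromRows (1 : Matrix q q ℝ) Δᵀ = (fromCols (1 : Matrix q q ℝ) Δ)ᵀ := by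
    rw [transpose_fromCols, transpose_one]
  unfold ZSet
  rw [Set.mem_setOf_eq, e, transpose_transpose]

end QMI


theorem stmt11 {p m L T nh : ℕ} (hp : 0 < p) (hm : 0 < m) (hL : 0 < L) (hT : 0 < T)
    (hnh : 0 < nh)
    (Y : Matrix (Fin p) (Fin T) ℝ) (X : Matrix (ARSt p m L) (Fin T) ℝ)
    (U : Matrix (Fin m) (Fin T) ℝ)
    (E : Matrix (ARRows p m L) (Fin nh) ℝ)
    (Φ : Matrix (Fin nh ⊕ Fin T) (Fin nh ⊕ Fin T) ℝ)
    (hΦ : Φ ∈ PiSet (Fin nh) (Fin T))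
    (hA2 : ∃ (Astar : Matrix (Fin p) (ARSt p m L) ℝ) (Bstar : Matrix (Fin p) (Fin m) ℝ),
      ∃ Δ ∈ arDset E Φ, arSysRow Astar Bstar * arBigX Y X U = arSysRow Astar Bstar * Δ) :
    arSigma Y X U E Φ ⊆ arSigmaR Y X U E Φ ∧
    ((LinearMap.range (arIota p m L).mulVecLin ≤ LinearMap.range E.mulVecLin ∨
        (-(Φ.toBlocks₂₂)).PosDef) →
      arSigma Y X U E Φ = arSigmaR Y X U E Φ) := by
  classical
  obtain ⟨hsym, hK0, hkerΦ, hSchur⟩ := hΦ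
  obtain ⟨K, hKdef⟩ : ∃ K, K = -(Φ.toBlocks₂₂) := ⟨_, rfl⟩
  have hKpsd : K.PosSemidef := by rw [hKdef]; exact hK0
  obtain ⟨Kh, Kd, hKh2, hKhT, hKdT, hK4, hK5, hKc, hK7, hK8⟩ := QMI.psd_struct hKpsd
  have hKT : Kᵀ = K := by rw [← hKh2, transpose_mul, hKhT]
  have hΦ22 : Φ.toBlocks₂₂ = -K := by rw [hKdef, neg_neg]
  have h21 : Φ.toBlocks₂₁ = (Φ.toBlocks₁₂)ᵀ := by
    ext i j
    simp only [Matrix.toBlocks₂₁, Matrix.toBlocks₁₂, Matrix.of_apply, Matrix.transpose_apply]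
    exact (congrFun (congrFun hsym (Sum.inr i)) (Sum.inl j)).symm
  have hproj : Φ.toBlocks₁₂ * (Kd * K) = Φ.toBlocks₁₂ := by
    have hz : Φ.toBlocks₁₂ * (1 - Kd * K) = 0 := by
      have hm : Φ.toBlocks₂₂ * (1 - Kd * K) = 0 := by
        rw [hΦ22, Matrix.neg_mul, neg_eq_zero, Matrix.mul_sub, Matrix.mul_one,
          ← Matrix.mul_assoc, hK4, sub_self]
      ext i j
      have hc : Φ.toBlocks₂₂ *ᵥ (fun k => (1 - Kd * K) k j) = 0 := by
        rw [QMI.mulVec_col, hm]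
        funext k; simp
      have h4 := congrFun (hkerΦ _ hc) i
      rw [QMI.mulVec_col] at h4
      simpa using h4
    rw [Matrix.mul_sub, Matrix.mul_one] at hz
    exact (sub_eq_zero.mp hz).symm
  have hpinv : pinv (Φ.toBlocks₂₂) = -Kd := by
    apply QMI.pinv_eq
    · rw [hΦ22]; simp only [Matrix.neg_mul, Matrix.mul_neg, neg_neg]; rw [hK4]
    · rw [hΦ22]; simp only [Matrix.neg_mul, Matrix.mul_neg, neg_neg]; rw [hK5]
    · rw [hΦ22]; simp only [Matrix.neg_mul, Matrix.mul_neg, neg_neg, transpose_mul, hKT, hKdT]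
      exact hKc
    · rw [hΦ22]; simp only [Matrix.neg_mul, Matrix.mul_neg, neg_neg, transpose_mul, hKT, hKdT]
      exact hKc.symm
  obtain ⟨S, hSdef⟩ : ∃ S, S = Φ.toBlocks₁₁ + Φ.toBlocks₁₂ * Kd * (Φ.toBlocks₁₂)ᵀ := ⟨_, rfl⟩
  have hSpsd : S.PosSemidef := by
    have h := hSchur
    rw [hpinv, Matrix.mul_neg, Matrix.neg_mul, sub_neg_eq_add] at h
    rw [hSdef]; exact h
  have hCL : ∀ C : Matrix (Fin p) (ARRows p m L) ℝ,
      C * arN Y X U E Φ * Cᵀ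
        = fromCols (C * E) (C * arBigX Y X U) * Φ
            * (fromCols (C * E) (C * arBigX Y X U))ᵀ := by
    intro C
    rw [← mul_fromCols]
    unfold arN
    calc C * (fromCols E (arBigX Y X U) * Φ * (fromCols E (arBigX Y X U))ᵀ) * Cᵀ
        = (C * fromCols E (arBigX Y X U)) * Φ
            * ((fromCols E (arBigX Y X U))ᵀ * Cᵀ) := by simp only [Matrix.mul_assoc]
    _ = _ := by rw [← transpose_mul]
  have memR : ∀ A : Matrix (Fin p) (ARSt p m L) ℝ, ∀ B : Matrix (Fin p) (Fin m) ℝ,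
      ((fromCols A B)ᵀ ∈ ZSet (arN Y X U E Φ)
        ↔ (arSysRow A B * arN Y X U E Φ * (arSysRow A B)ᵀ).PosSemidef) := by
    intro A B
    unfold arSysRow
    exact QMI.mem_zset_iff _ _
  have part1 : arSigma Y X U E Φ ⊆ arSigmaR Y X U E Φ := by
    rintro ⟨A, B⟩ hAB
    obtain ⟨Δ', ⟨Δh, hΔhZ, rfl⟩, hEq⟩ := hAB
    show (fromCols A B)ᵀ ∈ ZSet (arN Y X U E Φ)
    refine (memR A B).mpr ?_
    rw [hCL]
    have hGeq : arSysRow A B * arBigX Y X U = (arSysRow A B * E) * Δh := by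
      rw [hEq, ← Matrix.mul_assoc]
    rw [hGeq]
    have e2 : fromCols (arSysRow A B * E) ((arSysRow A B * E) * Δh)
        = (arSysRow A B * E) * fromCols 1 Δh := by
      rw [mul_fromCols, Matrix.mul_one]
    rw [e2]
    have hZ : (fromCols (1 : Matrix (Fin nh) (Fin nh) ℝ) Δh * Φ * (fromCols (1 : Matrix (Fin nh) (Fin nh) ℝ) Δh)ᵀ).PosSemidef :=
      (QMI.mem_zset_iff Φ Δh).mp hΔhZ
    have e3 : (arSysRow A B * E) * fromCols (1 : Matrix (Fin nh) (Fin nh) ℝ) Δh * Φ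
          * ((arSysRow A B * E) * fromCols (1 : Matrix (Fin nh) (Fin nh) ℝ) Δh)ᵀ
        = (arSysRow A B * E) * (fromCols (1 : Matrix (Fin nh) (Fin nh) ℝ) Δh * Φ * (fromCols (1 : Matrix (Fin nh) (Fin nh) ℝ) Δh)ᵀ)
          * (arSysRow A B * E)ᵀ := by
      rw [transpose_mul]; simp only [Matrix.mul_assoc]
    rw [e3]
    exact QMI.psdConj hZ _
  refine ⟨part1, fun hside => Set.Subset.antisymm part1 ?_⟩
  rintro ⟨A, B⟩ hABmem
  have hpsdC := (memR A B).mp hABmem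
  rw [hCL] at hpsdC
  obtain ⟨F, hF⟩ : ∃ F, F = arSysRow A B * E := ⟨_, rfl⟩
  obtain ⟨G, hG⟩ : ∃ G, G = arSysRow A B * arBigX Y X U := ⟨_, rfl⟩
  rw [← hF, ← hG] at hpsdC
  rw [QMI.key_expand Φ K Kd hΦ22 h21 hKT hKdT hK5 hproj F G, ← hSdef] at hpsdC
  have h2 : ∃ Θ₂ : Matrix (Fin nh) (Fin T) ℝ, F * Θ₂ = (G - F * (Φ.toBlocks₁₂ * Kd)) * (1 - Kd * K) ∧ Θ₂ * K = 0 := by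
    rcases hside with hrange | hpd
    · have hV : ∃ V : Matrix (Fin nh) (Fin p) ℝ, E * V = arIota p m L := by
        have hcol : ∀ j : Fin p, ∃ v : Fin nh → ℝ, E *ᵥ v = fun i => arIota p m L i j := by
          intro j
          have hmem : (fun i => arIota p m L i j)
              ∈ LinearMap.range (arIota p m L).mulVecLin := by
            refine ⟨Pi.single j 1, ?_⟩
            simp [Matrix.mulVecLin_apply, Matrix.mulVec_single]
            rfl
          obtain ⟨v, hv⟩ := hrange hmem
          exact ⟨v, hv⟩
        choose v hv using hcol
        refine ⟨Matrix.of (fun i j => v j i), ?_⟩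
        ext i j
        have e1 := congrFun (QMI.mulVec_col E (Matrix.of fun i j => v j i) j) i
        exact (e1.symm.trans (congrFun (hv j) i))
      obtain ⟨V, hEV⟩ := hV
      have hFV : F * V = 1 := by
        rw [hF, Matrix.mul_assoc, hEV]
        unfold arSysRow arIota
        rw [fromCols_mul_fromRows, Matrix.mul_one, Matrix.mul_zero, add_zero]
      refine ⟨V * ((G - F * (Φ.toBlocks₁₂ * Kd)) * (1 - Kd * K)), ?_, ?_⟩
      · rw [← Matrix.mul_assoc, hFV, Matrix.one_mul]
      · have hzero : (1 - Kd * K) * K = 0 := by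
          rw [Matrix.sub_mul, Matrix.one_mul, hKc, hK4, sub_self]
        calc V * ((G - F * (Φ.toBlocks₁₂ * Kd)) * (1 - Kd * K)) * K
            = V * ((G - F * (Φ.toBlocks₁₂ * Kd)) * ((1 - Kd * K) * K)) := by
              simp only [Matrix.mul_assoc]
        _ = 0 := by rw [hzero, Matrix.mul_zero, Matrix.mul_zero]
    · have hKpd : K.PosDef := by rw [hKdef]; exact hpd
      have hdet : IsUnit K.det := isUnit_iff_ne_zero.mpr (ne_of_gt hKpd.det_pos)
      have h1K : Kd * K = 1 := by
        calc Kd * K = (K⁻¹ * K) * (Kd * K) := by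
              rw [Matrix.nonsing_inv_mul K hdet, Matrix.one_mul]
        _ = K⁻¹ * (K * Kd * K) := by simp only [Matrix.mul_assoc]
        _ = K⁻¹ * K := by rw [hK4]
        _ = 1 := Matrix.nonsing_inv_mul K hdet
      exact ⟨0, by simp [h1K], by rw [Matrix.zero_mul]⟩
  obtain ⟨Θ, hFΘ, hSΘ⟩ := QMI.exists_theta F (G - F * (Φ.toBlocks₁₂ * Kd)) hSpsd Kh Kd
    hKh2 hKhT hKdT hK5 hKc hK7 hpsdC h2
  refine ⟨E * (Φ.toBlocks₁₂ * Kd + Θ), ⟨Φ.toBlocks₁₂ * Kd + Θ, ?_, rfl⟩, ?_⟩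
  · rw [QMI.mem_zset_iff,
      QMI.key_expand Φ K Kd hΦ22 h21 hKT hKdT hK5 hproj 1 (Φ.toBlocks₁₂ * Kd + Θ), ← hSdef,
      Matrix.one_mul, transpose_one, Matrix.mul_one, Matrix.one_mul, add_sub_cancel_left]
    exact hSΘ
  · show arSysRow A B * arBigX Y X U = arSysRow A B * (E * (Φ.toBlocks₁₂ * Kd + Θ))
    rw [← Matrix.mul_assoc, ← hF, Matrix.mul_add, hFΘ, ← hG]
    abel

end
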